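/- Ward's linkage of a merged pair to a third cluster in terms of centroid distances: for pairwise disjoint nonempty finite clusters A, B, C ⊆ ℝ^k, |A|·‖μ(A) − μ(C)‖² + |B|·‖μ(B) − μ(C)‖² = d_Ward(A, B) + (|A| + |B|)·‖μ(A ∪ B) − μ(C)‖². -/

import Mathlib

/-!
Weighting each centroid by its cluster size, `|A| μ(A) + |B| μ(B) = (|A| + |B|) μ(A ∪ B)`
for disjoint `A` and `B`. The theorem is then the parallel-axis (König–Huygens) identity for
two weighted points `u, v` and a reference point `w`: the weighted spread about `w` equals
the spread about the weighted mean `m`, which is `ab/(a+b) ‖u - v‖²`, plus `(a+b) ‖m - w‖²`.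
-/

open scoped Classical

noncomputable def centroid {k : ℕ} (A : Finset (EuclideanSpace ℝ (Fin k))) :
    EuclideanSpace ℝ (Fin k) :=
  (A.card : ℝ)⁻¹ • ∑ a ∈ A, a

noncomputable def dWard {k : ℕ} (X Y : Finset (EuclideanSpace ℝ (Fin k))) : ℝ :=
  ((X.card : ℝ) * Y.card / (X.card + Y.card)) * ‖centroid X - centroid Y‖ ^ 2

section ParallelAxis

variable {E : Type*} [NormedAddCommGroup E] [InnerProductSpace ℝ E]

theorem mul_norm_sq_add_mul_norm_sq_eq {a b : ℝ} (hab : a + b ≠ 0) (x y : E) :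
    a * ‖x‖ ^ 2 + b * ‖y‖ ^ 2 =
      a * b / (a + b) * ‖x - y‖ ^ 2 + (a + b) * ‖(a + b)⁻¹ • (a • x + b • y)‖ ^ 2 := by
  have hsmul : ∀ (c : ℝ) (z : E), ‖c • z‖ ^ 2 = c ^ 2 * ‖z‖ ^ 2 := fun c z => by
    rw [norm_smul, mul_pow, Real.norm_eq_abs, sq_abs]
  rw [hsmul, norm_sub_sq_real, norm_add_sq_real, hsmul, hsmul, real_inner_smul_left,
    real_inner_smul_right]
  field_simp
  ring

theorem mul_norm_sub_sq_add_mul_norm_sub_sq_eq {a b : ℝ} (ha : 0 ≤ a) (hb : 0 ≤ b)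
    (u v w : E) :
    a * ‖u - w‖ ^ 2 + b * ‖v - w‖ ^ 2 =
      a * b / (a + b) * ‖u - v‖ ^ 2 + (a + b) * ‖(a + b)⁻¹ • (a • u + b • v) - w‖ ^ 2 := by
  rcases (add_nonneg ha hb).eq_or_lt with hab | hab
  · obtain ⟨rfl, rfl⟩ : a = 0 ∧ b = 0 := ⟨by linarith, by linarith⟩
    simp
  have hmean : (a + b)⁻¹ • (a • u + b • v) - w = (a + b)⁻¹ • (a • (u - w) + b • (v - w)) := by
    rw [smul_sub, smul_sub, sub_add_sub_comm, ← add_smul, smul_sub, smul_smul,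
      inv_mul_cancel₀ hab.ne', one_smul]
  rw [hmean, ← sub_sub_sub_cancel_right u v w]
  exact mul_norm_sq_add_mul_norm_sq_eq hab.ne' _ _

end ParallelAxis

section Centroid

variable {k : ℕ}

theorem card_smul_centroid (A : Finset (EuclideanSpace ℝ (Fin k))) :
    (A.card : ℝ) • centroid A = ∑ a ∈ A, a := by
  rcases A.eq_empty_or_nonempty with rfl | hA
  · simp
  rw [centroid, smul_smul, mul_inv_cancel₀ (by exact_mod_cast hA.card_pos.ne'), one_smul]

theorem centroid_union_of_disjoint {A B : Finset (EuclideanSpace ℝ (Fin k))} (h : Disjoint A B) :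
    centroid (A ∪ B) =
      ((A.card : ℝ) + B.card)⁻¹ • ((A.card : ℝ) • centroid A + (B.card : ℝ) • centroid B) := by
  rw [card_smul_centroid, card_smul_centroid, ← Finset.sum_union h, centroid,
    Finset.card_union_of_disjoint h, Nat.cast_add]

end Centroid

theorem ward_merge_identity_general {k : ℕ} (A B C : Finset (EuclideanSpace ℝ (Fin k)))
    (hAB : Disjoint A B) :
    (A.card : ℝ) * ‖centroid A - centroid C‖ ^ 2 +
      (B.card : ℝ) * ‖centroid B - centroid C‖ ^ 2 =
    dWard A B + ((A.card : ℝ) + B.card) * ‖centroid (A ∪ B) - centroid C‖ ^ 2 := by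
  rw [centroid_union_of_disjoint hAB, dWard]
  exact mul_norm_sub_sq_add_mul_norm_sub_sq_eq (Nat.cast_nonneg _) (Nat.cast_nonneg _) _ _ _

theorem ward_merge_identity {k : ℕ} (A B C : Finset (EuclideanSpace ℝ (Fin k)))
    (hA : A.Nonempty) (hB : B.Nonempty) (hC : C.Nonempty)
    (hAB : Disjoint A B) (hAC : Disjoint A C) (hBC : Disjoint B C) :
    (A.card : ℝ) * ‖centroid A - centroid C‖ ^ 2 +
      (B.card : ℝ) * ‖centroid B - centroid C‖ ^ 2 =
    dWard A B + ((A.card : ℝ) + B.card) * ‖centroid (A ∪ B) - centroid C‖ ^ 2 :=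
  ward_merge_identity_general A B C hAB
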